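/- arXiv:2204.14212 — 3 statements merged into one kernel-verified Lean document; each statement's English description precedes it below -/
import Mathlib

section
/- For all integers m ≥ 4 and n ≥ 3, the dichromatic number of the strong product of the dicycles on m and n vertices equals 2: χ_a(C⃗_m ⊠ C⃗_n) = 2. -/
/-- A directed cycle in the digraph with arc relation `Adj`: a list of at least two
distinct vertices with an arc between consecutive vertices and an arc from the last
vertex back to the first. -/
def IsDicycle {V : Type*} (Adj : V → V → Prop) (l : List V) : Prop :=
  2 ≤ l.length ∧ l.Nodup ∧ l.Chain' Adj ∧
    ∀ h : l ≠ [], Adj (l.getLast h) (l.head h)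

/-- A set of vertices is acyclic if the induced subdigraph contains no directed cycle. -/
def AcyclicSet {V : Type*} (Adj : V → V → Prop) (S : Set V) : Prop :=
  ¬ ∃ l : List V, (∀ v ∈ l, v ∈ S) ∧ IsDicycle Adj l

/-- A coloring is acyclic if every color class is an acyclic set. -/
def IsAcyclicColoring {V C : Type*} (Adj : V → V → Prop) (f : V → C) : Prop :=
  ∀ c : C, AcyclicSet Adj (f ⁻¹' {c})

/-- The dichromatic number: the least `k` admitting an acyclic `k`-coloring. -/
noncomputable def dichromaticNumber {V : Type*} (Adj : V → V → Prop) : ℕ :=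
  sInf {k : ℕ | ∃ f : V → Fin k, IsAcyclicColoring Adj f}

/-- Cartesian product of digraphs. -/
def cartAdj {V W : Type*} (GA : V → V → Prop) (HA : W → W → Prop) :
    V × W → V × W → Prop :=
  fun p q => (p.1 = q.1 ∧ HA p.2 q.2) ∨ (GA p.1 q.1 ∧ p.2 = q.2)

/-- Direct product of digraphs. -/
def directAdj {V W : Type*} (GA : V → V → Prop) (HA : W → W → Prop) :
    V × W → V × W → Prop :=
  fun p q => GA p.1 q.1 ∧ HA p.2 q.2

/-- Strong product of digraphs. -/
def strongAdj {V W : Type*} (GA : V → V → Prop) (HA : W → W → Prop) :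
    V × W → V × W → Prop :=
  fun p q => (p.1 = q.1 ∧ HA p.2 q.2) ∨ (GA p.1 q.1 ∧ p.2 = q.2) ∨
    (GA p.1 q.1 ∧ HA p.2 q.2)

/-- Lexicographic product of digraphs. -/
def lexAdj {V W : Type*} (GA : V → V → Prop) (HA : W → W → Prop) :
    V × W → V × W → Prop :=
  fun p q => GA p.1 q.1 ∨ (p.1 = q.1 ∧ HA p.2 q.2)

/-- The dicycle on `n` vertices: arcs `i → i + 1` on `ZMod n`. -/
def dicycleAdj (n : ℕ) : ZMod n → ZMod n → Prop := fun i j => j = i + 1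

/-- The complete digraph on `k` vertices. -/
def completeAdj (k : ℕ) : Fin k → Fin k → Prop := fun i j => i ≠ j

/-!
A column `{i} × ZMod n` of `C⃗_m ⊠ C⃗_n` is a copy of `C⃗_n`, so one colour does not suffice.
For two colours, mark the vertex `(i, r i)` of every column, with `r 1 = r 3 = 2` and `r i = 0`
otherwise, and give colour `0` to the marked vertices of columns `0, 1` and to the unmarked
vertices of all other columns. Inside a colour class no vertical arc ends at a marked vertex,
so vertical arcs increase `j - r i` without wrapping around. Colour `0` meets columns `0, 1`
only in `(0, 0), (1, 2)`, and colour `1` meets columns `2, 3` only in `(2, 0), (3, 2)`; as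
`n ≥ 3` neither pair is joined by an arc. Cutting the cyclic column order there, every arc of a
colour class increases the lexicographic potential `(column, j - r i)`, so no class contains
a directed cycle.
-/

section Digraph

variable {V : Type*} {Adj : V → V → Prop}

theorem acyclicSet_of_potential {α : Type*} [Preorder α] {S : Set V} (φ : V → α)
    (hφ : ∀ u ∈ S, ∀ v ∈ S, Adj u v → φ u < φ v) : AcyclicSet Adj S := by
  rintro ⟨l, hS, hlen, -, hchain, hclose⟩
  obtain ⟨a, t, rfl⟩ :=
    List.exists_cons_of_ne_nil (List.ne_nil_of_length_pos (by omega : 0 < l.length))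
  have hmono : ((a :: t).map φ).IsChain (· < ·) :=
    (List.isChain_map φ).2 <| List.IsChain.imp_of_mem_imp
      (fun u v hu hv => hφ u (hS u hu) v (hS v hv)) hchain
  have hback : ((a :: t).map φ).getLast (by simp) < φ a := by
    rw [List.getLast_map]
    exact hφ _ (hS _ (List.getLast_mem _)) a (hS a List.mem_cons_self)
      (hclose (List.cons_ne_nil a t))
  have hloop : ((a :: t).map φ ++ [φ a]).IsChain (· < ·) :=
    hmono.append (.singleton _) (by simpa [List.getLast?_eq_some_getLast] using hback)
  exact lt_irrefl _ (hloop.rel_cons (List.mem_append_right _ (List.mem_singleton_self _)))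

theorem IsDicycle.map {W : Type*} {Adj' : W → W → Prop} {l : List V} {f : V → W}
    (hf : Function.Injective f) (hAdj : ∀ u v, Adj u v → Adj' (f u) (f v))
    (hl : IsDicycle Adj l) : IsDicycle Adj' (l.map f) := by
  obtain ⟨hlen, hnodup, hchain, hclose⟩ := hl
  refine ⟨by simpa using hlen, hnodup.map hf, (List.isChain_map f).2 (hchain.imp hAdj),
    fun hne => ?_⟩
  simpa using hAdj _ _ (hclose (by simpa using hne))

theorem IsDicycle.not_isAcyclicColoring {C : Type*} [Subsingleton C] {l : List V}
    (hl : IsDicycle Adj l) (f : V → C) : ¬ IsAcyclicColoring Adj f := by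
  intro hf
  obtain ⟨v, -⟩ := List.exists_mem_of_length_pos (by have := hl.1; omega : 0 < l.length)
  exact hf (f v) ⟨l, fun w _ => Subsingleton.elim (f w) (f v), hl⟩

theorem dichromaticNumber_eq_two {l : List V} (f : V → Fin 2) (hf : IsAcyclicColoring Adj f)
    (hl : IsDicycle Adj l) : dichromaticNumber Adj = 2 := by
  refine le_antisymm (Nat.sInf_le ⟨f, hf⟩) (le_csInf ⟨2, f, hf⟩ ?_)
  rintro k ⟨g, hg⟩
  by_contra hk
  have : Subsingleton (Fin k) := Fin.subsingleton_iff_le_one.2 (by omega)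
  exact hl.not_isAcyclicColoring g hg

theorem IsDicycle.map_prodMk_strongAdj {W : Type*} (GA : W → W → Prop) {l : List V} (u : W)
    (hl : IsDicycle Adj l) : IsDicycle (strongAdj GA Adj) (l.map (Prod.mk u)) :=
  hl.map (Prod.mk_right_injective u) fun _ _ h => Or.inl ⟨rfl, h⟩

end Digraph

theorem ZMod.val_add_one_of_add_one_ne_zero {n : ℕ} [NeZero n] {x : ZMod n} (hx : x + 1 ≠ 0) :
    (x + 1).val = x.val + 1 := by
  have hlt : x.val + 1 < n := by
    refine lt_of_le_of_ne (ZMod.val_lt x) fun h => hx ?_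
    rw [← ZMod.natCast_zmod_val x, ← Nat.cast_add_one, h, ZMod.natCast_self]
  have hone : (1 : ZMod n).val = 1 := ZMod.val_one'' (by omega)
  rw [ZMod.val_add_of_lt (by rwa [hone]), hone]

theorem isDicycle_dicycleAdj {n : ℕ} (hn : 2 ≤ n) :
    IsDicycle (dicycleAdj n) ((List.range n).map (Nat.cast : ℕ → ZMod n)) := by
  obtain ⟨k, rfl⟩ : ∃ k, n = k + 1 := ⟨n - 1, by omega⟩
  refine ⟨by simpa using hn, ?_, ?_, fun _ => ?_⟩
  · refine List.Nodup.map_on (fun i hi j hj hij => ?_) List.nodup_range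
    rw [List.mem_range] at hi hj
    simpa [ZMod.val_cast_of_lt hi, ZMod.val_cast_of_lt hj] using congrArg ZMod.val hij
  · refine (List.isChain_map _).2 ((List.isChain_range_succ _ k).2 fun i _ => ?_)
    simp [dicycleAdj]
  · simp [dicycleAdj, List.getLast_map, List.getLast_range]

theorem strongAdj_dicycleAdj_iff {m n : ℕ} {i i' : ZMod m} {j j' : ZMod n} :
    strongAdj (dicycleAdj m) (dicycleAdj n) (i, j) (i', j') ↔
      (i' = i ∧ j' = j + 1) ∨ (i' = i + 1 ∧ (j' = j ∨ j' = j + 1)) := by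
  simp only [strongAdj, dicycleAdj]
  grind

theorem acyclicSet_strongAdj_dicycleAdj {m n : ℕ} [NeZero m] [NeZero n]
    {S : Set (ZMod m × ZMod n)} (r : ZMod m → ZMod n) (b : ZMod m)
    (hcol : ∀ i j, (i, j) ∈ S → (i, j + 1) ∈ S → j + 1 ≠ r i)
    (hseam : ∀ j j', (b, j) ∈ S → (b + 1, j') ∈ S → j' ≠ j ∧ j' ≠ j + 1) :
    AcyclicSet (strongAdj (dicycleAdj m) (dicycleAdj n)) S := by
  refine acyclicSet_of_potential (fun p => toLex ((p.1 - (b + 1)).val, (p.2 - r p.1).val)) ?_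
  rintro ⟨i, j⟩ hu ⟨i', j'⟩ hv hadj
  rw [Prod.Lex.toLex_lt_toLex]
  rcases strongAdj_dicycleAdj_iff.1 hadj with ⟨hi, hj⟩ | ⟨hi, hj⟩ <;> subst i'
  · subst j'
    have hne : j - r i + 1 ≠ 0 := by
      rw [sub_add_eq_add_sub, sub_ne_zero]
      exact hcol i j hu hv
    refine Or.inr ⟨rfl, ?_⟩
    dsimp only
    rw [← sub_add_eq_add_sub, ZMod.val_add_one_of_add_one_ne_zero hne]
    omega
  · have hne : i - (b + 1) + 1 ≠ 0 := by
      intro h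
      obtain rfl : i = b := by linear_combination h
      exact hj.elim (hseam j j' hu hv).1 (hseam j j' hu hv).2
    refine Or.inl ?_
    dsimp only
    rw [add_sub_right_comm, ZMod.val_add_one_of_add_one_ne_zero hne]
    omega

def markedColoring {V W : Type*} (P : V → Prop) [DecidablePred P] [DecidableEq W] (r : V → W)
    (p : V × W) : Fin 2 :=
  if (P p.1 ↔ p.2 = r p.1) then 0 else 1

section MarkedColoring

variable {V W : Type*} {P : V → Prop} [DecidablePred P] [DecidableEq W] {r : V → W}

theorem eq_of_markedColoring_eq_markedColoring {i : V} {j j' : W}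
    (h : markedColoring P r (i, j) = markedColoring P r (i, j')) (hj' : j' = r i) : j = j' := by
  unfold markedColoring at h
  split_ifs at h <;> simp_all

theorem eq_of_markedColoring_eq {i : V} {j : W} {c : Fin 2}
    (h : markedColoring P r (i, j) = c) (hc : P i ↔ c = 0) : j = r i := by
  unfold markedColoring at h
  split_ifs at h <;> subst h <;> simp_all

end MarkedColoring

theorem isAcyclicColoring_markedColoring {m n : ℕ} [NeZero m] [Fact (1 < n)]
    (P : ZMod m → Prop) [DecidablePred P] (r : ZMod m → ZMod n)
    (hseam : ∀ c : Fin 2, ∃ b, (P b ↔ c = 0) ∧ (P (b + 1) ↔ c = 0) ∧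
      r (b + 1) ≠ r b ∧ r (b + 1) ≠ r b + 1) :
    IsAcyclicColoring (strongAdj (dicycleAdj m) (dicycleAdj n)) (markedColoring P r) := by
  intro c
  obtain ⟨b, hPb, hPb', hr₀, hr₁⟩ := hseam c
  refine acyclicSet_strongAdj_dicycleAdj r b (fun i j hu hv hj => ?_) fun j j' hu hv => ?_
  · have hjj : j = j + 1 := eq_of_markedColoring_eq_markedColoring (hu.trans hv.symm) hj
    exact one_ne_zero (left_eq_add.1 hjj)
  · rw [eq_of_markedColoring_eq hu hPb, eq_of_markedColoring_eq hv hPb']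
    exact ⟨hr₀, hr₁⟩

theorem exists_isAcyclicColoring_fin_two {m n : ℕ} (hm : 4 ≤ m) (hn : 3 ≤ n) :
    ∃ f : ZMod m × ZMod n → Fin 2,
      IsAcyclicColoring (strongAdj (dicycleAdj m) (dicycleAdj n)) f := by
  have : Fact (1 < m) := ⟨by omega⟩
  have : Fact (1 < n) := ⟨by omega⟩
  have h2 : (2 : ZMod n) ≠ 0 ∧ (2 : ZMod n) ≠ 1 := by
    constructor <;> intro h <;>
      simpa [ZMod.val_ofNat_of_lt (by omega : 2 < n), ZMod.val_one] using congrArg ZMod.val h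
  refine ⟨markedColoring (fun i : ZMod m => i.val ≤ 1)
    (fun i => if i.val = 1 ∨ i.val = 3 then 2 else 0), isAcyclicColoring_markedColoring _ _ ?_⟩
  intro c
  fin_cases c
  · exact ⟨0, by simp [ZMod.val_one, h2]⟩
  · refine ⟨2, ?_⟩
    norm_num [ZMod.val_ofNat_of_lt (by omega : 2 < m), ZMod.val_ofNat_of_lt (by omega : 3 < m), h2]

theorem stmt12 (m n : ℕ) (hm : 4 ≤ m) (hn : 3 ≤ n) :
    dichromaticNumber (strongAdj (dicycleAdj m) (dicycleAdj n)) = 2 := by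
  obtain ⟨f, hf⟩ := exists_isAcyclicColoring_fin_two hm hn
  exact dichromaticNumber_eq_two f hf ((isDicycle_dicycleAdj (by omega)).map_prodMk_strongAdj _ 0)
end

section
/- Let G and H be digraphs with V(H) nonempty, and let k = χ_a(H). Then the dichromatic number of the lexicographic product of G by H equals the dichromatic number of the lexicographic product of G by the complete digraph on k vertices: χ_a(G[H]) = χ_a(G[K↔_k]). -/
/-!
A set `S` is acyclic iff the transitive closure of the loopless arcs induced on `S` is irreflexive,
since every closed walk contains a dicycle; in this form acyclicity pulls back along maps that
preserve induced arcs.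

`χ_a(G[H]) ≤ χ_a(G[K_k])`: color `(u, x)` by `F (u, g x)`, with `g` an optimal coloring of `H`
and `F` one of `G[K_k]`. A closed walk in a color class either stays in a fibre `{u} × g⁻¹(j)`,
where it is a closed walk of `H` inside a class of `g`, or projects to a closed walk of `G[K_k]`
inside a class of `F`.

`χ_a(G[K_k]) ≤ χ_a(G[H])`: an optimal coloring `f` of `G[H]` uses at least `k` colors on each
copy `{u} × V(H)`; choosing `k` of them, `E u : Fin k ↪ colors`, color `G[K_k]` by
`(u, j) ↦ E u j`. Two vertices of one class lie in different copies, so picking in each copy a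
vertex of `H` of the chosen color maps the class into a class of `f` along arcs of `G`.
-/
open Relation

theorem List.exists_cons_append_singleton_infix_of_not_nodup {α : Type*} :
    ∀ {l : List α}, ¬ l.Nodup → ∃ y b, y :: b ++ [y] <:+: l
  | [], h => absurd List.nodup_nil h
  | z :: t, h => by
    by_cases hz : z ∈ t
    · obtain ⟨b, c, rfl⟩ := List.append_of_mem hz
      exact ⟨z, b, [], c, by simp⟩
    · obtain ⟨y, b, hb⟩ :=
        List.exists_cons_append_singleton_infix_of_not_nodup fun ht => h (.cons hz ht)
      exact ⟨y, b, List.infix_cons hb⟩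

theorem Relation.transGen_iff_exists_isChain {α : Type*} {r : α → α → Prop} {a b : α} :
    TransGen r a b ↔ ∃ l, (a :: l ++ [b]).IsChain r := by
  constructor
  · intro h
    obtain ⟨c, hac, hcb⟩ := TransGen.tail'_iff.1 h
    obtain ⟨l, hl, hlast⟩ := List.exists_isChain_cons_of_relationReflTransGen hac
    exact ⟨l, hl.append (.singleton b) (by simp [List.getLast?_eq_some_getLast, hlast, hcb])⟩
  · rintro ⟨l, hl⟩
    exact TransGen.tail' (List.relationReflTransGen_of_exists_isChain_cons l hl.left_of_append rfl)
      (hl.rel_getLast_head_of_append (List.cons_ne_nil _ _) (List.cons_ne_nil _ _))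

section Dicycles

variable {V : Type*} {Adj : V → V → Prop}

theorem isDicycle_cons_iff {x : V} {l : List V} :
    IsDicycle Adj (x :: l) ↔ l ≠ [] ∧ (x :: l).Nodup ∧ (x :: l ++ [x]).IsChain Adj := by
  show 2 ≤ (x :: l).length ∧ (x :: l).Nodup ∧ (x :: l).IsChain Adj ∧ _ ↔ _
  rw [List.isChain_append]
  simp [List.getLast?_eq_some_getLast, List.ne_nil_iff_length_pos, Nat.succ_le_iff]

theorem IsDicycle.mono {Adj' : V → V → Prop} (h : ∀ a b, Adj a b → Adj' a b) {c : List V}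
    (hc : IsDicycle Adj c) : IsDicycle Adj' c := by
  obtain ⟨hlen, hnd, hch, hcl⟩ := hc
  exact ⟨hlen, hnd, List.IsChain.imp h hch, fun hne => h _ _ (hcl hne)⟩

theorem isChain_ne_of_nodup {x : V} {l : List V} (hl : l ≠ []) (hnd : (x :: l).Nodup) :
    (x :: l ++ [x]).IsChain (· ≠ ·) := by
  refine hnd.isChain.append (.singleton x) ?_
  simp only [List.getLast?_eq_some_getLast (List.cons_ne_nil x l), List.getLast_cons hl,
    Option.mem_def, Option.some.injEq, List.head?_cons, forall_eq']
  exact fun h => (List.nodup_cons.1 hnd).1 (h ▸ List.getLast_mem hl)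

theorem exists_isDicycle_subset_of_isChain (hAdj : ∀ a, ¬ Adj a a) {x : V} {l : List V}
    (h : (x :: l ++ [x]).IsChain Adj) : ∃ c ⊆ x :: l, IsDicycle Adj c := by
  induction hn : l.length using Nat.strong_induction_on generalizing x l with
  | _ n ih =>
  by_cases hnd : (x :: l).Nodup
  · have hl : l ≠ [] := by
      rintro rfl
      exact hAdj x (List.rel_of_isChain_cons_cons h)
    exact ⟨x :: l, List.Subset.refl _, isDicycle_cons_iff.2 ⟨hl, hnd, h⟩⟩
  · -- a repeated vertex `y` cuts out a shorter closed walk `y :: b ++ [y]`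
    obtain ⟨y, b, hb⟩ := List.exists_cons_append_singleton_infix_of_not_nodup hnd
    have hlen : b.length < n := by
      have := hb.length_le
      simp only [List.length_append, List.length_cons, List.length_nil] at this
      omega
    obtain ⟨c, hc, hcyc⟩ := ih _ hlen (h.infix (hb.trans (List.prefix_append _ _).isInfix)) rfl
    exact ⟨c, fun v hv => hb.subset (List.subset_append_left _ _ (hc hv)), hcyc⟩

end Dicycles

section Acyclic

variable {V V' : Type*} {Adj : V → V → Prop} {Adj' : V' → V' → Prop}

/-- Loops are dropped: a loop is not a dicycle. -/
def InducedAdj (Adj : V → V → Prop) (S : Set V) (a b : V) : Prop :=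
  a ∈ S ∧ b ∈ S ∧ a ≠ b ∧ Adj a b

theorem mem_of_transGen_inducedAdj {S : Set V} {a b : V} (h : TransGen (InducedAdj Adj S) a b) :
    a ∈ S ∧ b ∈ S := by
  obtain ⟨c, hac, -⟩ := TransGen.head'_iff.1 h
  obtain ⟨d, -, hdb⟩ := TransGen.tail'_iff.1 h
  exact ⟨hac.1, hdb.2.1⟩

theorem acyclicSet_iff_forall_not_transGen {S : Set V} :
    AcyclicSet Adj S ↔ ∀ x, ¬ TransGen (InducedAdj Adj S) x x := by
  constructor
  · intro hS x hx
    obtain ⟨l, hl⟩ := transGen_iff_exists_isChain.1 hx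
    have hmem : ∀ v ∈ x :: l, v ∈ S :=
      hl.backwards_concat_induction _ _ (fun _ _ hab _ => hab.1) (mem_of_transGen_inducedAdj hx).1
    obtain ⟨c, hc, hcyc⟩ := exists_isDicycle_subset_of_isChain (fun _ h => h.2.2.1 rfl) hl
    exact hS ⟨c, fun v hv => hmem v (hc hv), hcyc.mono fun _ _ h => h.2.2.2⟩
  · rintro h ⟨_ | ⟨x, l⟩, hS, hcyc⟩
    · exact absurd hcyc.1 (by simp)
    obtain ⟨hl, hnd, hch⟩ := isDicycle_cons_iff.1 hcyc
    have hne := isChain_ne_of_nodup hl hnd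
    refine h x (transGen_iff_exists_isChain.2 ⟨l, List.isChain_iff_getElem.2 fun i hi => ?_⟩)
    have hsub : x :: l ++ [x] ⊆ x :: l := List.append_subset.2
      ⟨List.Subset.refl _, List.cons_subset.2 ⟨List.mem_cons_self, List.nil_subset _⟩⟩
    exact ⟨hS _ (hsub (List.getElem_mem _)), hS _ (hsub (List.getElem_mem _)), hne.getElem i hi,
      hch.getElem i hi⟩

theorem AcyclicSet.of_map {S : Set V} {T : Set V'} (φ : V → V')
    (hφ : ∀ a b, InducedAdj Adj S a b → InducedAdj Adj' T (φ a) (φ b))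
    (hT : AcyclicSet Adj' T) : AcyclicSet Adj S := by
  rw [acyclicSet_iff_forall_not_transGen] at hT ⊢
  exact fun x hx => hT (φ x) (TransGen.lift φ hφ x x hx)

theorem AcyclicSet.anti {S T : Set V} (hST : S ⊆ T) (hT : AcyclicSet Adj T) :
    AcyclicSet Adj S :=
  hT.of_map id fun _ _ ⟨ha, hb, hne, hab⟩ => ⟨hST ha, hST hb, hne, hab⟩

theorem Set.Subsingleton.acyclicSet {S : Set V} (hS : S.Subsingleton) : AcyclicSet Adj S :=
  acyclicSet_iff_forall_not_transGen.2 fun x hx => by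
    obtain ⟨c, ⟨hx, hc, hne, -⟩, -⟩ := TransGen.head'_iff.1 hx
    exact hne (hS hx hc)

theorem transGen_inducedAdj_preimage {ψ : V → V'} {T : Set V'}
    (hψ : ∀ a b, Adj a b → ψ a ≠ ψ b → Adj' (ψ a) (ψ b)) {a b : V}
    (h : TransGen (InducedAdj Adj (ψ ⁻¹' T)) a b) :
    TransGen (InducedAdj Adj (ψ ⁻¹' {ψ a})) a b ∨ TransGen (InducedAdj Adj' T) (ψ a) (ψ b) := by
  induction h with
  | @single b h =>
    by_cases hab : ψ a = ψ b
    · exact .inl (.single ⟨rfl, hab.symm, h.2.2⟩)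
    · exact .inr (.single ⟨h.1, h.2.1, hab, hψ a b h.2.2.2 hab⟩)
  | @tail b c _ h ih =>
    by_cases hbc : ψ b = ψ c
    · rcases ih with ih | ih
      · exact .inl (ih.tail ⟨(mem_of_transGen_inducedAdj ih).2, hbc.symm.trans
          (mem_of_transGen_inducedAdj ih).2, h.2.2⟩)
      · exact .inr (hbc ▸ ih)
    · have hstep : InducedAdj Adj' T (ψ b) (ψ c) := ⟨h.1, h.2.1, hbc, hψ b c h.2.2.2 hbc⟩
      rcases ih with ih | ih
      · exact .inr (.single ((mem_of_transGen_inducedAdj ih).2 ▸ hstep))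
      · exact .inr (ih.tail hstep)

theorem AcyclicSet.preimage {ψ : V → V'} {T : Set V'} (hT : AcyclicSet Adj' T)
    (hψ : ∀ a b, Adj a b → ψ a ≠ ψ b → Adj' (ψ a) (ψ b))
    (hfib : ∀ y ∈ T, AcyclicSet Adj (ψ ⁻¹' {y})) : AcyclicSet Adj (ψ ⁻¹' T) := by
  rw [acyclicSet_iff_forall_not_transGen] at hT ⊢
  intro x hx
  rcases transGen_inducedAdj_preimage hψ hx with h | h
  · exact acyclicSet_iff_forall_not_transGen.1
      (hfib _ (mem_of_transGen_inducedAdj hx).1) x h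
  · exact hT _ h

end Acyclic

section Coloring

variable {V C D : Type*} {Adj : V → V → Prop}

theorem IsAcyclicColoring.of_comp {f : V → C} {e : C → D}
    (h : IsAcyclicColoring Adj (e ∘ f)) : IsAcyclicColoring Adj f :=
  fun c => (h (e c)).anti fun _ hv => congrArg e hv

theorem dichromaticNumber_le_card [Fintype C] {f : V → C} (hf : IsAcyclicColoring Adj f) :
    dichromaticNumber Adj ≤ Fintype.card C :=
  Nat.sInf_le ⟨Fintype.equivFin C ∘ f, IsAcyclicColoring.of_comp
    (e := (Fintype.equivFin C).symm) (by simpa [Function.comp_def] using hf)⟩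

theorem exists_isAcyclicColoring_dichromaticNumber [Finite V] (Adj : V → V → Prop) :
    ∃ f : V → Fin (dichromaticNumber Adj), IsAcyclicColoring Adj f := by
  have : Fintype V := Fintype.ofFinite V
  refine Nat.sInf_mem (s := {k | ∃ f : V → Fin k, IsAcyclicColoring Adj f})
    ⟨Fintype.card V, Fintype.equivFin V, ?_⟩
  exact IsAcyclicColoring.of_comp (e := (Fintype.equivFin V).symm)
    fun v => (Set.subsingleton_singleton (a := v)).acyclicSet.anti (by simp)

end Coloring

section Lex

variable {V W : Type*} [Finite V] [Finite W]

theorem dichromaticNumber_lexAdj_le {GA : V → V → Prop} (hG : ∀ u, ¬ GA u u)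
    (HA : W → W → Prop) :
    dichromaticNumber (lexAdj GA HA) ≤
      dichromaticNumber (lexAdj GA (completeAdj (dichromaticNumber HA))) := by
  obtain ⟨g, hg⟩ := exists_isAcyclicColoring_dichromaticNumber HA
  obtain ⟨F, hF⟩ := exists_isAcyclicColoring_dichromaticNumber
    (lexAdj GA (completeAdj (dichromaticNumber HA)))
  let ψ : V × W → V × Fin (dichromaticNumber HA) := fun p => (p.1, g p.2)
  have hψ : ∀ p q, lexAdj GA HA p q → ψ p ≠ ψ q →
      lexAdj GA (completeAdj (dichromaticNumber HA)) (ψ p) (ψ q) := by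
    rintro p q (h | ⟨h1, h2⟩) hne
    · exact .inl h
    · exact .inr ⟨h1, fun hg => hne (Prod.ext h1 hg)⟩
  have hfib : ∀ y, AcyclicSet (lexAdj GA HA) (ψ ⁻¹' {y}) := fun y =>
    (hg y.2).of_map Prod.snd fun p q ⟨hp, hq, hne, hpq⟩ => by
      have h1 : p.1 = q.1 := (congrArg Prod.fst hp).trans (congrArg Prod.fst hq).symm
      refine ⟨congrArg Prod.snd hp, congrArg Prod.snd hq, fun h2 => hne (Prod.ext h1 h2), ?_⟩
      exact hpq.resolve_left (h1 ▸ hG p.1) |>.2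
  simpa using dichromaticNumber_le_card (f := fun p => F (ψ p))
    fun c => (hF c).preimage hψ fun y _ => hfib y

theorem dichromaticNumber_lexAdj_complete_le (GA : V → V → Prop) (HA : W → W → Prop) :
    dichromaticNumber (lexAdj GA (completeAdj (dichromaticNumber HA))) ≤
      dichromaticNumber (lexAdj GA HA) := by
  classical
  have : Fintype W := Fintype.ofFinite W
  obtain ⟨f, hf⟩ := exists_isAcyclicColoring_dichromaticNumber (lexAdj GA HA)
  have hfib : ∀ u, IsAcyclicColoring HA fun x => f (u, x) := fun u c =>
    (hf c).of_map (fun x => (u, x)) fun x y ⟨hx, hy, hne, hxy⟩ =>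
      ⟨hx, hy, fun h => hne (congrArg Prod.snd h), .inr ⟨rfl, hxy⟩⟩
  have hE : ∀ u, ∃ E : Fin (dichromaticNumber HA) ↪ Fin (dichromaticNumber (lexAdj GA HA)),
      ∀ j, ∃ x, f (u, x) = E j := by
    intro u
    have hrange : IsAcyclicColoring HA (Set.rangeFactorization fun x => f (u, x)) :=
      IsAcyclicColoring.of_comp (e := Subtype.val) (hfib u)
    obtain ⟨E⟩ := Function.Embedding.nonempty_of_card_le (α := Fin (dichromaticNumber HA))
      (β := Set.range fun x => f (u, x))
      (by simpa only [Fintype.card_fin] using dichromaticNumber_le_card hrange)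
    exact ⟨E.trans (Function.Embedding.subtype _), fun j => (E j).2⟩
  choose E hE using hE
  choose pick hpick using hE
  suffices hcol : IsAcyclicColoring (lexAdj GA (completeAdj (dichromaticNumber HA)))
      fun p => E p.1 p.2 by
    simpa using dichromaticNumber_le_card hcol
  refine fun c => (hf c).of_map (fun p => (p.1, pick p.1 p.2)) fun p q ⟨hp, hq, hne, hpq⟩ => ?_
  have h1 : p.1 ≠ q.1 := fun h1 =>
    hne (Prod.ext h1 ((E q.1).injective ((h1 ▸ hp : E q.1 p.2 = c).trans hq.symm)))
  refine ⟨(hpick _ _).trans hp, (hpick _ _).trans hq, fun h => h1 (Prod.ext_iff.1 h).1, ?_⟩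
  exact .inl (hpq.resolve_right fun h => h1 h.1)

end Lex

theorem stmt13_general {V W : Type*} [Fintype V] [Fintype W]
    (GA : V → V → Prop) (HA : W → W → Prop)
    (hG : Irreflexive GA) :
    dichromaticNumber (lexAdj GA HA) =
      dichromaticNumber (lexAdj GA (completeAdj (dichromaticNumber HA))) :=
  (dichromaticNumber_lexAdj_le hG HA).antisymm (dichromaticNumber_lexAdj_complete_le GA HA)

theorem stmt13 {V W : Type*} [Fintype V] [Fintype W] [Nonempty W]
    (GA : V → V → Prop) (HA : W → W → Prop)
    (hG : Irreflexive GA) (hH : Irreflexive HA) :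
    dichromaticNumber (lexAdj GA HA) =
      dichromaticNumber (lexAdj GA (completeAdj (dichromaticNumber HA))) :=
  stmt13_general GA HA hG
end

section
/- Let G and H be digraphs and let (w_1, …, w_t) with w_i = (u_i, x_i) be a directed cycle in the strong product G ⊠ H (respectively, in the cartesian product G □ H). If the set U = {u_1, …, u_t} has more than one element, then the subdigraph of G induced on U contains a directed cycle. -/
/-!
Project the cycle onto its first coordinates: every arc of `G ⊠ H` (or `G □ H`) becomes an arc
of `G` or a repeated vertex, so the projection is a closed walk in the reflexive closure of `G`,
all of whose vertices lie in `U`. Two distinct vertices `u ≠ v` of `U` then reach each other inside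
`G[U]`, giving a closed walk of positive length in `G[U]`; cutting such a walk at a repeated vertex
yields a shorter one, so a shortest one is a directed cycle.
-/

open Relation

section ClosedWalk

variable {α V : Type*} {R : α → α → Prop}

def IsClosedWalk (R : α → α → Prop) (l : List α) : Prop :=
  l.IsChain R ∧ ∀ h : l ≠ [], R (l.getLast h) (l.head h)

theorem IsDicycle.isClosedWalk {l : List α} (h : IsDicycle R l) : IsClosedWalk R l :=
  h.2.2

theorem IsClosedWalk.imp_of_mem {S : α → α → Prop} {l : List α}
    (H : ∀ a ∈ l, ∀ b ∈ l, R a b → S a b) (hl : IsClosedWalk R l) : IsClosedWalk S l :=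
  ⟨hl.1.imp_of_mem_imp fun a b ha hb => H a ha b hb,
    fun hne => H _ (List.getLast_mem hne) _ (List.head_mem hne) (hl.2 hne)⟩

theorem IsClosedWalk.map {S : V → V → Prop} (f : α → V) (hf : ∀ a b, R a b → S (f a) (f b))
    {l : List α} (hl : IsClosedWalk R l) : IsClosedWalk S (l.map f) :=
  ⟨List.isChain_map_of_isChain f hf hl.1, fun hne => by
    rw [List.getLast_map, List.head_map]
    exact hf _ _ (hl.2 (by simpa using hne))⟩

theorem IsClosedWalk.reflTransGen {l : List α} (hl : IsClosedWalk R l) {u v : α}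
    (hu : u ∈ l) (hv : v ∈ l) : ReflTransGen R u v := by
  have hne : l ≠ [] := List.ne_nil_of_mem hu
  have to_last : ReflTransGen R u (l.getLast hne) :=
    hl.1.backwards_induction (ReflTransGen R · (l.getLast hne)) l
      (fun _ _ hxy h => h.head hxy) (fun _ => .refl) u hu
  have from_head : ReflTransGen R (l.head hne) v :=
    hl.1.induction (ReflTransGen R (l.head hne) ·) l
      (fun _ _ hxy h => h.tail hxy) (fun _ => .refl) v hv
  exact to_last.trans (.head (hl.2 hne) from_head)

theorem IsClosedWalk.two_le_length (hR : ∀ x, ¬ R x x) {l : List α} (hl : IsClosedWalk R l)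
    (hne : l ≠ []) : 2 ≤ l.length :=
  match l, hl, hne with
  | [x], hl, _ => absurd (hl.2 (List.cons_ne_nil x [])) (hR x)
  | _ :: _ :: _, _, _ => by simp

theorem List.exists_eq_append_cons_append_cons_of_not_nodup {l : List α} (h : ¬ l.Nodup) :
    ∃ a x b c, l = a ++ x :: (b ++ x :: c) := by
  obtain ⟨x, hx⟩ := not_forall_not.mp (mt List.nodup_iff_sublist.mpr h)
  obtain ⟨r₁, r₂, rfl, hx₁, hx₂⟩ := List.cons_sublist_iff.mp hx
  obtain ⟨a, b, rfl⟩ := List.append_of_mem hx₁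
  obtain ⟨c, d, rfl⟩ := List.append_of_mem (List.singleton_sublist.mp hx₂)
  exact ⟨a, x, b ++ c, d, by simp⟩

theorem IsClosedWalk.exists_isDicycle (hR : ∀ x, ¬ R x x) {l : List α} (hl : IsClosedWalk R l)
    (hne : l ≠ []) : ∃ c, IsDicycle R c := by
  by_cases hnd : l.Nodup
  · exact ⟨l, hl.two_le_length hR hne, hnd, hl⟩
  obtain ⟨a, x, b, c, rfl⟩ := List.exists_eq_append_cons_append_cons_of_not_nodup hnd
  have hchain : ((x :: b) ++ [x]).IsChain R :=
    hl.1.infix ⟨a, c, by simp⟩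
  have hsub : IsClosedWalk R (x :: b) :=
    ⟨hchain.left_of_append, fun hne => hchain.rel_getLast_head_of_append hne (by simp)⟩
  exact hsub.exists_isDicycle hR (List.cons_ne_nil x b)
termination_by l.length
decreasing_by simp_all; omega

theorem exists_isDicycle_of_transGen (hR : ∀ x, ¬ R x x) {a : α} (h : TransGen R a a) :
    ∃ c, IsDicycle R c := by
  obtain ⟨b, hab, hba⟩ := TransGen.head'_iff.mp h
  obtain ⟨l, hchain, hlast⟩ := List.exists_isChain_cons_of_relationReflTransGen hba
  exact IsClosedWalk.exists_isDicycle hR ⟨hchain, fun _ => hlast ▸ hab⟩ (List.cons_ne_nil b l)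

theorem IsClosedWalk.exists_isDicycle_of_reflGen {R : V → V → Prop} (hR : ∀ x, ¬ R x x)
    {m : List V} (hm : IsClosedWalk (ReflGen R) m) (hU : {v | v ∈ m}.Nontrivial) :
    ∃ c, (∀ v ∈ c, v ∈ m) ∧ IsDicycle R c := by
  obtain ⟨u, hu, v, hv, huv⟩ := hU
  -- Working in `R` restricted to `m` keeps the cycle extracted from `TransGen` inside `m`.
  set Rm : V → V → Prop := fun x y => x ∈ m ∧ y ∈ m ∧ R x y
  have hm' : IsClosedWalk (ReflGen Rm) m :=
    hm.imp_of_mem fun x hx y hy h => match h with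
      | .refl => .refl
      | .single h => .single ⟨hx, hy, h⟩
  have reach {x y : V} (hx : x ∈ m) (hy : y ∈ m) : ReflTransGen Rm x y :=
    reflTransGen_reflGen ▸ hm'.reflTransGen hx hy
  have huv' : TransGen Rm u v :=
    (reflTransGen_iff_eq_or_transGen.mp (reach hu hv)).resolve_left (Ne.symm huv)
  obtain ⟨c, hlen, hnd, hchain, hwrap⟩ :=
    exists_isDicycle_of_transGen (fun x h => hR x h.2.2) (huv'.trans_left (reach hv hu))
  refine ⟨c, ?_, hlen, hnd, IsClosedWalk.imp_of_mem (fun _ _ _ _ h => h.2.2) ⟨hchain, hwrap⟩⟩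
  exact hchain.backwards_induction (· ∈ m) c (fun _ _ h _ => h.1) (fun hne => (hwrap hne).1)

end ClosedWalk

section Products

variable {V W : Type*} {GA : V → V → Prop} {HA : W → W → Prop}

theorem reflGen_fst_of_strongAdj {p q : V × W} (h : strongAdj GA HA p q) :
    ReflGen GA p.1 q.1 := by
  rcases h with ⟨h, -⟩ | ⟨h, -⟩ | ⟨h, -⟩
  · exact h ▸ .refl
  · exact .single h
  · exact .single h

theorem reflGen_fst_of_cartAdj {p q : V × W} (h : cartAdj GA HA p q) :
    ReflGen GA p.1 q.1 := by
  rcases h with ⟨h, -⟩ | ⟨h, -⟩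
  · exact h ▸ .refl
  · exact .single h

end Products

theorem stmt17_general {V W : Type*} (GA : V → V → Prop) (HA : W → W → Prop)
    (hG : Irreflexive GA)
    (l : List (V × W))
    (hU : Set.Nontrivial {v : V | v ∈ l.map Prod.fst}) :
    (IsDicycle (strongAdj GA HA) l →
      ∃ lG : List V, (∀ v ∈ lG, v ∈ l.map Prod.fst) ∧ IsDicycle GA lG) ∧
    (IsDicycle (cartAdj GA HA) l →
      ∃ lG : List V, (∀ v ∈ lG, v ∈ l.map Prod.fst) ∧ IsDicycle GA lG) :=
  ⟨fun hc => (hc.isClosedWalk.map Prod.fst fun _ _ => reflGen_fst_of_strongAdj)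
      |>.exists_isDicycle_of_reflGen hG hU,
    fun hc => (hc.isClosedWalk.map Prod.fst fun _ _ => reflGen_fst_of_cartAdj)
      |>.exists_isDicycle_of_reflGen hG hU⟩

theorem stmt17 {V W : Type*} (GA : V → V → Prop) (HA : W → W → Prop)
    (hG : Irreflexive GA) (hH : Irreflexive HA)
    (l : List (V × W))
    (hU : Set.Nontrivial {v : V | v ∈ l.map Prod.fst}) :
    (IsDicycle (strongAdj GA HA) l →
      ∃ lG : List V, (∀ v ∈ lG, v ∈ l.map Prod.fst) ∧ IsDicycle GA lG) ∧
    (IsDicycle (cartAdj GA HA) l →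
      ∃ lG : List V, (∀ v ∈ lG, v ∈ l.map Prod.fst) ∧ IsDicycle GA lG) :=
  stmt17_general GA HA hG l hU
end
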